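/- arXiv:1701.03513 — 5 statements merged into one kernel-verified Lean document; each statement's English description precedes it below -/
import Mathlib

section
/- Let d = m + k with m, k ≥ 1, let Σ be a symmetric positive definite d×d real matrix with block decomposition Σ = [[Σ_mm, Σ_mo],[Σ_om, Σ_oo]], let μ ∈ ℝ^d and b ∈ ℝ^k. Then on the affine subspace {z ∈ ℝ^d : z_obs = b}, the Mahalanobis depth z ↦ D^M(z|μ,Σ) = (1 + (z−μ)ᵀ Σ⁻¹ (z−μ))⁻¹ attains its unique global maximum at the point z* with z*_obs = b and z*_miss = μ_miss + Σ_mo Σ_oo⁻¹ (b − μ_obs) (the conditional-mean imputation of the missing coordinates). -/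
/-!
Write `Q(x) = xᵀ Σ⁻¹ x`. The conditional mean `z*` is chosen so that `Σ⁻¹ (z* − μ)` vanishes on the
missing coordinates: indeed `Σ (0, Σ_oo⁻¹ (b − μ_obs)) = z* − μ`. Every competitor `z` on the affine
subspace differs from `z*` only in the missing coordinates, so `z − z*` is `Σ⁻¹`-orthogonal to
`z* − μ`, and Pythagoras gives `Q(z − μ) = Q(z* − μ) + Q(z − z*) > Q(z* − μ)` for `z ≠ z*`.
-/

open Matrix

namespace Matrix

theorem PosDef.toBlocks₂₂ {m k R : Type*} [Ring R] [PartialOrder R] [StarRing R]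
    {S : Matrix (m ⊕ k) (m ⊕ k) R} (hS : S.PosDef) : S.toBlocks₂₂.PosDef :=
  hS.submatrix Sum.inr_injective

theorem mulVec_sum_elim_zero {m k R : Type*} [Fintype m] [Fintype k] [Semiring R]
    (S : Matrix (m ⊕ k) (m ⊕ k) R) (v : k → R) :
    S *ᵥ Sum.elim 0 v = Sum.elim (S.toBlocks₁₂ *ᵥ v) (S.toBlocks₂₂ *ᵥ v) := by
  rw [← fromBlocks_toBlocks S, fromBlocks_mulVec]
  simp

theorem inv_mulVec_conditionalMean {m k R : Type*} [Fintype m] [Fintype k]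
    [DecidableEq m] [DecidableEq k] [CommRing R] {S : Matrix (m ⊕ k) (m ⊕ k) R}
    (hS : IsUnit S) (hS₂₂ : IsUnit S.toBlocks₂₂) (c : k → R) :
    S⁻¹ *ᵥ Sum.elim (S.toBlocks₁₂ *ᵥ (S.toBlocks₂₂⁻¹ *ᵥ c)) c =
      Sum.elim (0 : m → R) (S.toBlocks₂₂⁻¹ *ᵥ c) := by
  have := hS.invertible
  have := hS₂₂.invertible
  refine inv_mulVec_eq_vec ?_
  rw [mulVec_sum_elim_zero, mulVec_mulVec, mulVec_mulVec, mul_inv_of_invertible, one_mulVec]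

theorem dotProduct_mulVec_add_add {n R : Type*} [Fintype n] [CommRing R] {A : Matrix n n R}
    (hA : A.IsSymm) {u p : n → R} (h : (A *ᵥ u) ⬝ᵥ p = 0) :
    (u + p) ⬝ᵥ (A *ᵥ (u + p)) = u ⬝ᵥ (A *ᵥ u) + p ⬝ᵥ (A *ᵥ p) := by
  have h' : p ⬝ᵥ (A *ᵥ u) = 0 := by rw [dotProduct_comm, h]
  replace h : u ⬝ᵥ (A *ᵥ p) = 0 := by rw [dotProduct_mulVec, ← mulVec_transpose, hA.eq, h]
  rw [mulVec_add, add_dotProduct, dotProduct_add, dotProduct_add, h, h']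
  ring

theorem PosDef.dotProduct_mulVec_lt_add {n : Type*} [Fintype n] {A : Matrix n n ℝ}
    (hA : A.PosDef) {u p : n → ℝ} (h : (A *ᵥ u) ⬝ᵥ p = 0) (hp : p ≠ 0) :
    u ⬝ᵥ (A *ᵥ u) < (u + p) ⬝ᵥ (A *ᵥ (u + p)) := by
  rw [dotProduct_mulVec_add_add (isHermitian_iff_isSymm.mp hA.isHermitian) h]
  simpa using hA.dotProduct_mulVec_pos hp

end Matrix

theorem mahalanobis_depth_max_on_affine_subspace_general
    (m k : ℕ)
    (S : Matrix (Fin m ⊕ Fin k) (Fin m ⊕ Fin k) ℝ) (hS : S.PosDef)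
    (μ : Fin m ⊕ Fin k → ℝ) (b : Fin k → ℝ) :
    let D : (Fin m ⊕ Fin k → ℝ) → ℝ := fun z => (1 + (z - μ) ⬝ᵥ (S⁻¹ *ᵥ (z - μ)))⁻¹
    let zstar : Fin m ⊕ Fin k → ℝ :=
      Sum.elim
        (fun i => μ (Sum.inl i) +
          (S.toBlocks₁₂ *ᵥ ((S.toBlocks₂₂)⁻¹ *ᵥ (b - fun j => μ (Sum.inr j)))) i)
        b
    (∀ j, zstar (Sum.inr j) = b j) ∧
    (∀ z : Fin m ⊕ Fin k → ℝ, (∀ j, z (Sum.inr j) = b j) → z ≠ zstar → D z < D zstar) := by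
  intro D zstar
  refine ⟨fun _ => rfl, fun z hz hne => ?_⟩
  set c : Fin k → ℝ := b - fun j => μ (Sum.inr j)
  have hzstar : zstar - μ = Sum.elim (S.toBlocks₁₂ *ᵥ (S.toBlocks₂₂⁻¹ *ᵥ c)) c := by
    ext (i | j) <;> simp [zstar, c]
  have horth : (S⁻¹ *ᵥ (zstar - μ)) ⬝ᵥ (z - zstar) = 0 := by
    rw [hzstar, inv_mulVec_conditionalMean hS.isUnit hS.toBlocks₂₂.isUnit]
    simp [dotProduct, Fintype.sum_sum_type, hz, zstar]
  have hlt := hS.inv.dotProduct_mulVec_lt_add horth (sub_ne_zero.mpr hne)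
  rw [sub_add_sub_cancel'] at hlt
  have hnonneg : 0 ≤ (zstar - μ) ⬝ᵥ (S⁻¹ *ᵥ (zstar - μ)) :=
    hS.inv.posSemidef.dotProduct_mulVec_nonneg _
  exact inv_strictAnti₀ (by positivity) (by linarith)

/-- On the affine subspace `{z : z_obs = b}`, the Mahalanobis depth
`z ↦ (1 + (z−μ)ᵀ Σ⁻¹ (z−μ))⁻¹` attains its unique global maximum at the
conditional-mean imputation `z*`. -/
theorem mahalanobis_depth_max_on_affine_subspace
    (m k : ℕ) (hm : 1 ≤ m) (hk : 1 ≤ k)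
    (S : Matrix (Fin m ⊕ Fin k) (Fin m ⊕ Fin k) ℝ) (hS : S.PosDef)
    (μ : Fin m ⊕ Fin k → ℝ) (b : Fin k → ℝ) :
    let D : (Fin m ⊕ Fin k → ℝ) → ℝ := fun z => (1 + (z - μ) ⬝ᵥ (S⁻¹ *ᵥ (z - μ)))⁻¹
    let zstar : Fin m ⊕ Fin k → ℝ :=
      Sum.elim
        (fun i => μ (Sum.inl i) +
          (S.toBlocks₁₂ *ᵥ ((S.toBlocks₂₂)⁻¹ *ᵥ (b - fun j => μ (Sum.inr j)))) i)
        b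
    (∀ j, zstar (Sum.inr j) = b j) ∧
    (∀ z : Fin m ⊕ Fin k → ℝ, (∀ j, z (Sum.inr j) = b j) → z ≠ zstar → D z < D zstar) :=
  mahalanobis_depth_max_on_affine_subspace_general m k S hS μ b
end

section
/- Let d = m + k with m, k ≥ 1, let Σ be a symmetric positive definite d×d real matrix with block decomposition Σ = [[Σ_mm, Σ_mo],[Σ_om, Σ_oo]], let μ ∈ ℝ^d and b ∈ ℝ^k, and let z ∈ ℝ^d satisfy z_obs = b. Then z satisfies the single-output regression equation z_j = μ_j + Σ_{j,−j} (Σ_{−j,−j})⁻¹ (z_{−j} − μ_{−j}) for every missing coordinate j ∈ {1,…,m} if and only if z_miss = μ_miss + Σ_mo Σ_oo⁻¹ (b − μ_obs), i.e., if and only if z is the multiple-output (multivariate conditional mean) regression imputation. -/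
/-!
Both regressions are characterised by a linear condition on `v = Σ⁻¹ (z - μ)`. Write
`w = z - μ = Σ v` in blocks with an invertible lower-right block `D`; eliminating the second
block gives `w₁ - B D⁻¹ w₂ = (A - B D⁻¹ C) v₁`, and the Schur complement `A - B D⁻¹ C` is
invertible since `det Σ = det D * det (A - B D⁻¹ C)`. So `w₁ = B D⁻¹ w₂` iff `v₁ = 0`. For the
blocks (missing, observed) this says that the multiple-output imputation holds iff `v` vanishes
on the missing coordinates; for the blocks (`{j}`, the rest) it says that the `j`-th
single-output equation holds iff `v j = 0`.
-/

open Matrix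

namespace Matrix

variable {R : Type*} [CommRing R] {p q : Type*} [Fintype p] [Fintype q]

theorem mulVec_comp_inl (S : Matrix (p ⊕ q) (p ⊕ q) R) (v : p ⊕ q → R) :
    (S *ᵥ v) ∘ Sum.inl = S.toBlocks₁₁ *ᵥ (v ∘ Sum.inl) + S.toBlocks₁₂ *ᵥ (v ∘ Sum.inr) := by
  conv_lhs => rw [← fromBlocks_toBlocks S, ← Sum.elim_comp_inl_inr v, fromBlocks_mulVec]
  rfl

theorem mulVec_comp_inr (S : Matrix (p ⊕ q) (p ⊕ q) R) (v : p ⊕ q → R) :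
    (S *ᵥ v) ∘ Sum.inr = S.toBlocks₂₁ *ᵥ (v ∘ Sum.inl) + S.toBlocks₂₂ *ᵥ (v ∘ Sum.inr) := by
  conv_lhs => rw [← fromBlocks_toBlocks S, ← Sum.elim_comp_inl_inr v, fromBlocks_mulVec]
  rfl

variable [DecidableEq q]

theorem mulVec_comp_inl_sub_eq_schur (S : Matrix (p ⊕ q) (p ⊕ q) R)
    (hD : IsUnit S.toBlocks₂₂.det) (v : p ⊕ q → R) :
    (S *ᵥ v) ∘ Sum.inl - S.toBlocks₁₂ *ᵥ (S.toBlocks₂₂⁻¹ *ᵥ ((S *ᵥ v) ∘ Sum.inr)) =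
      (S.toBlocks₁₁ - S.toBlocks₁₂ * S.toBlocks₂₂⁻¹ * S.toBlocks₂₁) *ᵥ (v ∘ Sum.inl) := by
  simp only [mulVec_comp_inl, mulVec_comp_inr, mulVec_add, mulVec_mulVec, nonsing_inv_mul _ hD,
    one_mulVec, sub_mulVec, Matrix.mul_assoc]
  abel

variable [DecidableEq p]

theorem isUnit_det_schur (S : Matrix (p ⊕ q) (p ⊕ q) R) (hS : IsUnit S.det)
    (hD : IsUnit S.toBlocks₂₂.det) :
    IsUnit (S.toBlocks₁₁ - S.toBlocks₁₂ * S.toBlocks₂₂⁻¹ * S.toBlocks₂₁).det := by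
  let := invertibleOfIsUnitDet _ hD
  rw [← fromBlocks_toBlocks S, det_fromBlocks₂₂, invOf_eq_nonsing_inv] at hS
  exact isUnit_of_mul_isUnit_right hS

theorem inv_mulVec_comp_inl_eq_zero_iff (S : Matrix (p ⊕ q) (p ⊕ q) R) (hS : IsUnit S.det)
    (hD : IsUnit S.toBlocks₂₂.det) (w : p ⊕ q → R) :
    (S⁻¹ *ᵥ w) ∘ Sum.inl = 0 ↔
      w ∘ Sum.inl = S.toBlocks₁₂ *ᵥ (S.toBlocks₂₂⁻¹ *ᵥ (w ∘ Sum.inr)) := by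
  obtain ⟨v, rfl⟩ : ∃ v, w = S *ᵥ v :=
    ⟨S⁻¹ *ᵥ w, by rw [mulVec_mulVec, mul_nonsing_inv _ hS, one_mulVec]⟩
  rw [mulVec_mulVec, nonsing_inv_mul _ hS, one_mulVec, ← sub_eq_zero (a := (S *ᵥ v) ∘ Sum.inl),
    mulVec_comp_inl_sub_eq_schur S hD]
  have hX := isUnit_det_schur S hS hD
  constructor
  · intro h
    rw [h, mulVec_zero]
  · intro h
    rw [← one_mulVec (v ∘ Sum.inl), ← nonsing_inv_mul _ hX, ← mulVec_mulVec, h, mulVec_zero]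

variable {n : Type*} [Fintype n] [DecidableEq n]

theorem inv_mulVec_apply_eq_zero_iff (S : Matrix n n R) (hS : IsUnit S.det) (a : n)
    (hS' : IsUnit (S.submatrix (Subtype.val : {i // i ≠ a} → n)
      (Subtype.val : {i // i ≠ a} → n)).det)
    (w : n → R) :
    (S⁻¹ *ᵥ w) a = 0 ↔
      w a = (fun i : {i // i ≠ a} => S a i.1) ⬝ᵥ
        ((S.submatrix (Subtype.val : {i // i ≠ a} → n) (Subtype.val : {i // i ≠ a} → n))⁻¹ *ᵥ
          fun i => w i.1) := by
  -- Split the coordinates as `{a} ⊕ {i // i ≠ a}`; the first block then has a single entry.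
  let e := Equiv.sumCompl (· = a)
  have h := inv_mulVec_comp_inl_eq_zero_iff (S.submatrix e e)
    (by rwa [det_submatrix_equiv_self]) hS' (w ∘ e)
  rw [funext_iff, funext_iff, Unique.forall_iff, Unique.forall_iff, inv_submatrix_equiv,
    submatrix_mulVec_equiv] at h
  simp only [Function.comp_assoc, Equiv.self_comp_symm, Function.comp_id] at h
  exact h

end Matrix

theorem single_output_iff_multiple_output_regression_general
    (m k : ℕ)
    (S : Matrix (Fin m ⊕ Fin k) (Fin m ⊕ Fin k) ℝ) (hS : S.PosDef)
    (μ : Fin m ⊕ Fin k → ℝ) (b : Fin k → ℝ)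
    (z : Fin m ⊕ Fin k → ℝ) (hz : ∀ j, z (Sum.inr j) = b j) :
    (∀ j0 : Fin m,
      z (Sum.inl j0) = μ (Sum.inl j0) +
        (fun i : {i : Fin m ⊕ Fin k // i ≠ Sum.inl j0} => S (Sum.inl j0) i.1) ⬝ᵥ
          ((S.submatrix (fun i : {i : Fin m ⊕ Fin k // i ≠ Sum.inl j0} => i.1)
              (fun i : {i : Fin m ⊕ Fin k // i ≠ Sum.inl j0} => i.1))⁻¹ *ᵥ
            fun i : {i : Fin m ⊕ Fin k // i ≠ Sum.inl j0} => z i.1 - μ i.1))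
    ↔ (∀ i : Fin m, z (Sum.inl i) = μ (Sum.inl i) +
        (S.toBlocks₁₂ *ᵥ ((S.toBlocks₂₂)⁻¹ *ᵥ (b - fun j => μ (Sum.inr j)))) i) := by
  have hdet {ι : Type} [Fintype ι] [DecidableEq ι] {e : ι → Fin m ⊕ Fin k} (he : e.Injective) :
      IsUnit (S.submatrix e e).det :=
    (hS.submatrix he).det_pos.ne'.isUnit
  have hobs : (z - μ) ∘ Sum.inr = b - fun j => μ (Sum.inr j) := by
    ext j
    simp [hz]
  calc _ ↔ ∀ j0 : Fin m, (S⁻¹ *ᵥ (z - μ)) (Sum.inl j0) = 0 := by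
        refine forall_congr' fun j0 => ?_
        rw [inv_mulVec_apply_eq_zero_iff S (hdet Function.injective_id) _
          (hdet Subtype.val_injective), Pi.sub_apply, sub_eq_iff_eq_add']
        rfl
    _ ↔ (S⁻¹ *ᵥ (z - μ)) ∘ Sum.inl = 0 := funext_iff.symm
    _ ↔ _ := inv_mulVec_comp_inl_eq_zero_iff S (hdet Function.injective_id)
        (hdet Sum.inr_injective) (z - μ)
    _ ↔ _ := by
        rw [hobs, funext_iff]
        refine forall_congr' fun i => ?_
        rw [Function.comp_apply, Pi.sub_apply, sub_eq_iff_eq_add']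

/-- For `z` with `z_obs = b`, the single-output regression equations
`z_j = μ_j + Σ_{j,−j} (Σ_{−j,−j})⁻¹ (z_{−j} − μ_{−j})` hold for every missing coordinate `j`
iff `z_miss = μ_miss + Σ_mo Σ_oo⁻¹ (b − μ_obs)` (the multiple-output regression imputation). -/
theorem single_output_iff_multiple_output_regression
    (m k : ℕ) (hm : 1 ≤ m) (hk : 1 ≤ k)
    (S : Matrix (Fin m ⊕ Fin k) (Fin m ⊕ Fin k) ℝ) (hS : S.PosDef)
    (μ : Fin m ⊕ Fin k → ℝ) (b : Fin k → ℝ)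
    (z : Fin m ⊕ Fin k → ℝ) (hz : ∀ j, z (Sum.inr j) = b j) :
    (∀ j0 : Fin m,
      z (Sum.inl j0) = μ (Sum.inl j0) +
        (fun i : {i : Fin m ⊕ Fin k // i ≠ Sum.inl j0} => S (Sum.inl j0) i.1) ⬝ᵥ
          ((S.submatrix (fun i : {i : Fin m ⊕ Fin k // i ≠ Sum.inl j0} => i.1)
              (fun i : {i : Fin m ⊕ Fin k // i ≠ Sum.inl j0} => i.1))⁻¹ *ᵥ
            fun i : {i : Fin m ⊕ Fin k // i ≠ Sum.inl j0} => z i.1 - μ i.1))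
    ↔ (∀ i : Fin m, z (Sum.inl i) = μ (Sum.inl i) +
        (S.toBlocks₁₂ *ᵥ ((S.toBlocks₂₂)⁻¹ *ᵥ (b - fun j => μ (Sum.inr j)))) i) :=
  single_output_iff_multiple_output_regression_general m k S hS μ b z hz
end

section
/- Let M be a symmetric invertible d×d real matrix, let z, a ∈ ℝ^d satisfy aᵀ M⁻¹ z = 0, and let c ∈ ℝ. Then det(M + z aᵀ + a zᵀ + c·a aᵀ) = det(M) · (1 + c·(aᵀ M⁻¹ a) − (aᵀ M⁻¹ a)(zᵀ M⁻¹ z)). -/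
/-! Write the update as `z aᵀ + a (z + c a)ᵀ`, a sum of two rank-one matrices, i.e. `U V` with
`U : d × 2`, `V : 2 × d`. The matrix determinant lemma `det (M + U V) = det M · det (1 + V M⁻¹ U)`
reduces the claim to a `2 × 2` determinant, whose off-diagonal entries `aᵀ M⁻¹ z` and
`zᵀ M⁻¹ a` both vanish because `M⁻¹` is symmetric. -/

open Matrix

namespace Matrix

variable {m n α : Type*} [Fintype m] [CommRing α]

theorem of_mul_mul_transpose_of_apply (r : n → m → α) (B : Matrix m m α) (c : n → m → α)
    (i j : n) : (of r * B * (of c)ᵀ) i j = r i ⬝ᵥ (B *ᵥ c j) := by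
  rw [Matrix.mul_assoc, mul_apply, dotProduct]
  simp [mul_apply, mulVec, dotProduct, Finset.mul_sum]

theorem IsSymm.dotProduct_mulVec_comm {A : Matrix m m α} (hA : A.IsSymm) (u v : m → α) :
    u ⬝ᵥ (A *ᵥ v) = v ⬝ᵥ (A *ᵥ u) := by
  rw [dotProduct_mulVec, ← mulVec_transpose, hA.eq, dotProduct_comm]

variable [DecidableEq m]

theorem det_add_vecMulVec_add_vecMulVec {A : Matrix m m α} (hA : IsUnit A.det)
    (u v w x : m → α) :
    (A + vecMulVec u v + vecMulVec w x).det
      = A.det * ((1 + v ⬝ᵥ (A⁻¹ *ᵥ u)) * (1 + x ⬝ᵥ (A⁻¹ *ᵥ w))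
          - v ⬝ᵥ (A⁻¹ *ᵥ w) * (x ⬝ᵥ (A⁻¹ *ᵥ u))) := by
  have hUV : vecMulVec u v + vecMulVec w x = (of ![u, w])ᵀ * of ![v, x] := by
    ext i j
    simp [vecMulVec_apply, mul_apply, Fin.sum_univ_two]
  rw [add_assoc, hUV, det_add_mul _ _ hA, det_fin_two]
  simp only [add_apply, of_mul_mul_transpose_of_apply]
  simp

end Matrix

/-- If `M` is symmetric invertible and `aᵀ M⁻¹ z = 0`, then
`det(M + z aᵀ + a zᵀ + c·a aᵀ) = det(M)·(1 + c·(aᵀ M⁻¹ a) − (aᵀ M⁻¹ a)(zᵀ M⁻¹ z))`. -/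
theorem det_rank_two_update
    (d : ℕ) (M : Matrix (Fin d) (Fin d) ℝ) (hsym : M.IsSymm) (hinv : IsUnit M.det)
    (z a : Fin d → ℝ) (h : a ⬝ᵥ (M⁻¹ *ᵥ z) = 0) (c : ℝ) :
    (M + vecMulVec z a + vecMulVec a z + c • vecMulVec a a).det
      = M.det * (1 + c * (a ⬝ᵥ (M⁻¹ *ᵥ a)) - (a ⬝ᵥ (M⁻¹ *ᵥ a)) * (z ⬝ᵥ (M⁻¹ *ᵥ z))) := by
  have h' : z ⬝ᵥ (M⁻¹ *ᵥ a) = 0 := by rw [hsym.inv.dotProduct_mulVec_comm, h]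
  have hsplit : vecMulVec a z + c • vecMulVec a a = vecMulVec a (z + c • a) := by
    rw [vecMulVec_add, vecMulVec_smul]
  rw [add_assoc, hsplit, det_add_vecMulVec_add_vecMulVec hinv, add_dotProduct, smul_dotProduct,
    add_dotProduct, smul_dotProduct, h, h', smul_eq_mul, smul_eq_mul]
  ring
end

section
/- Let Y be an n×d real matrix (n ≥ 2) with sample mean μ and sample covariance Σ, and assume Σ is invertible. Let M ⊆ {1,…,n}×{1,…,d} be a set of ('missing') entry positions, and for each row i let miss(i) = {j : (i,j) ∈ M} and obs(i) its complement in {1,…,d}. Suppose that for every row i with miss(i) ≠ ∅, Y_{i,miss(i)} = μ_{miss(i)} + Σ_{miss(i),obs(i)} (Σ_{obs(i),obs(i)})⁻¹ (Y_{i,obs(i)} − μ_{obs(i)}) (each incomplete row is imputed by the conditional mean given its observed coordinates, with moments of Y). Then Y is a stationary point of the covariance determinant with respect to the missing entries: for every (i,j) ∈ M, the real function t ↦ det Σ(Y with entry (i,j) replaced by t) has derivative 0 at t = Y_{i,j}. -/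
/-!
Write `Σ` for the sample covariance of `Y`, `w = Yᵢ - μ` for the centred `i`-th row, and split the
coordinates into the missing set `A` and the observed set `B` of row `i`. Moving the entry `Yᵢⱼ`
moves `Σ` with velocity `(eⱼ wᵀ + w eⱼᵀ) / (n - 1)`: the motion of the mean drops out because centred
rows sum to zero. By Jacobi's formula the derivative of `det Σ` is therefore
`2 (adj Σ · w)ⱼ / (n - 1)`.

Conditional-mean imputation says `w_A = Σ_AB Σ_BB⁻¹ w_B`, i.e. `w = Σ z` for the vector `z` that is
`0` on `A` and `Σ_BB⁻¹ w_B` on `B`. Hence `adj Σ · w = det Σ • z` vanishes on `A`. Here `Σ_BB` is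
invertible because `Σ` is positive semidefinite and invertible, hence positive definite.
-/

open Matrix

section ConditionalMean

variable {ι R : Type*} [Fintype ι]

theorem Matrix.mulVec_dite_zero [NonUnitalNonAssocSemiring R] (S : Matrix ι ι R) (p : ι → Prop)
    [DecidablePred p] (z : {x // ¬ p x} → R) (r : ι) :
    (S *ᵥ fun x => if h : p x then 0 else z ⟨x, h⟩) r = ∑ b : {x // ¬ p x}, S r b * z b := by
  rw [mulVec, dotProduct, ← Fintype.sum_subtype_add_sum_subtype p,
    Finset.sum_eq_zero fun a _ => by simp [a.2], zero_add]
  exact Finset.sum_congr rfl fun b _ => by simp [b.2]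

theorem Matrix.exists_mulVec_eq_vanishing_of_conditional_mean [DecidableEq ι] [CommRing R]
    (S : Matrix ι ι R) (p : ι → Prop) [DecidablePred p]
    (hS : IsUnit (S.submatrix (Subtype.val : {x // ¬ p x} → ι) Subtype.val).det) (w : ι → R)
    (hw : ∀ a : {x // p x}, w a =
      (S.submatrix Subtype.val (Subtype.val : {x // ¬ p x} → ι) *ᵥ
        ((S.submatrix Subtype.val Subtype.val)⁻¹ *ᵥ fun b : {x // ¬ p x} => w b)) a) :
    ∃ z, S *ᵥ z = w ∧ ∀ a, p a → z a = 0 := by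
  set zB := (S.submatrix (Subtype.val : {x // ¬ p x} → ι) Subtype.val)⁻¹ *ᵥ
    fun b : {x // ¬ p x} => w b
  refine ⟨fun x => if h : p x then 0 else zB ⟨x, h⟩, funext fun r => ?_, fun a ha => dif_pos ha⟩
  rw [mulVec_dite_zero]
  by_cases hr : p r
  · exact (hw ⟨r, hr⟩).symm
  · have hBB : S.submatrix Subtype.val Subtype.val *ᵥ zB = fun b : {x // ¬ p x} => w b := by
      rw [mulVec_mulVec, mul_nonsing_inv _ hS, one_mulVec]
    exact congrFun hBB ⟨r, hr⟩

end ConditionalMean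

section Jacobi

variable {ι : Type*} [Fintype ι] [DecidableEq ι]

theorem Matrix.det_updateRow_eq_sum_mul_adjugate {R : Type*} [CommRing R] (A : Matrix ι ι R)
    (k : ι) (v : ι → R) : (A.updateRow k v).det = ∑ l, v l * adjugate A l k := by
  rw [← cramer_transpose_apply, cramer_eq_adjugate_mulVec, ← adjugate_transpose]
  simp only [mulVec, dotProduct, transpose_apply, mul_comm]

/-- Jacobi's formula, read off from the multilinearity of the determinant in the rows. -/
theorem hasDerivAt_det {A : ℝ → Matrix ι ι ℝ} {A' : Matrix ι ι ℝ} {y : ℝ}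
    (hA : ∀ k l, HasDerivAt (fun t => A t k l) (A' k l) y) :
    HasDerivAt (fun t => (A t).det) (trace (A' * adjugate (A y))) y := by
  let detRows : ContinuousMultilinearMap ℝ (fun _ : ι => ι → ℝ) ℝ :=
    ⟨detRowAlternating.toMultilinearMap, continuous_id.matrix_det⟩
  have hrows : HasDerivAt (fun t k => A t k) (fun k => A' k) y :=
    hasDerivAt_pi.2 fun k => hasDerivAt_pi.2 fun l => hA k l
  refine ((detRows.hasFDerivAt _).comp_hasDerivAt y hrows).congr_deriv ?_
  simp only [ContinuousMultilinearMap.linearDeriv_apply]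
  exact Finset.sum_congr rfl fun k _ => det_updateRow_eq_sum_mul_adjugate (A y) k (A' k)

end Jacobi

section Path

variable {ρ ι : Type*} [DecidableEq ρ] [DecidableEq ι]

theorem hasDerivAt_updateRow_update_apply (Y : Matrix ρ ι ℝ) (i : ρ) (j : ι) (y : ℝ) (m : ρ)
    (k : ι) :
    HasDerivAt (fun t => Y.updateRow i (Function.update (Y i) j t) m k)
      ((0 : Matrix ρ ι ℝ).updateRow i (Pi.single j 1) m k) y := by
  rcases eq_or_ne m i with rfl | hm
  · simpa using hasDerivAt_pi.1 (hasDerivAt_update (Y m) j y) k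
  · simpa [hm] using hasDerivAt_const y (Y m k)

end Path

section SampleMoments

variable {n : ℕ} {ι : Type*}

noncomputable def sampleMean (X : Matrix (Fin n) ι ℝ) : ι → ℝ := (n : ℝ)⁻¹ • ∑ m, X m

noncomputable def sampleCov (X : Matrix (Fin n) ι ℝ) : Matrix ι ι ℝ :=
  ((n : ℝ) - 1)⁻¹ • ∑ m, vecMulVec (X m - sampleMean X) (X m - sampleMean X)

theorem sampleMean_apply (X : Matrix (Fin n) ι ℝ) (k : ι) :
    sampleMean X k = (n : ℝ)⁻¹ * ∑ m, X m k := by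
  rw [sampleMean, Pi.smul_apply, smul_eq_mul]
  exact congrArg _ (Finset.sum_apply k _ _)

theorem sampleCov_apply (X : Matrix (Fin n) ι ℝ) (k l : ι) :
    sampleCov X k l =
      ((n : ℝ) - 1)⁻¹ * ∑ m, (X m k - sampleMean X k) * (X m l - sampleMean X l) := by
  simp [sampleCov, Matrix.sum_apply, vecMulVec_apply]

theorem sum_sub_sampleMean_apply (X : Matrix (Fin n) ι ℝ) (k : ι) :
    ∑ m, (X m k - sampleMean X k) = 0 := by
  rcases n.eq_zero_or_pos with rfl | hn
  · simp
  · rw [Finset.sum_sub_distrib, sampleMean_apply]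
    simp [hn.ne']

theorem sampleCov_transpose (X : Matrix (Fin n) ι ℝ) : (sampleCov X)ᵀ = sampleCov X := by
  simp [sampleCov, transpose_sum, transpose_vecMulVec]

theorem sampleCov_posSemidef [Fintype ι] (X : Matrix (Fin n) ι ℝ) : (sampleCov X).PosSemidef := by
  rcases n with _ | n
  -- the coefficient `(0 - 1)⁻¹` is negative, but the sum is empty
  · simp [sampleCov, PosSemidef.zero]
  · refine (posSemidef_sum _ fun m _ => ?_).smul (inv_nonneg.2 ?_)
    · simpa using posSemidef_vecMulVec_self_star (X m - sampleMean X)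
    · simp

theorem hasDerivAt_sampleCov_apply [Fintype ι] {X : ℝ → Matrix (Fin n) ι ℝ}
    {X' : Matrix (Fin n) ι ℝ} {y : ℝ} (hX : ∀ m k, HasDerivAt (fun t => X t m k) (X' m k) y)
    (k l : ι) :
    HasDerivAt (fun t => sampleCov (X t) k l)
      ((((n : ℝ) - 1)⁻¹ • ∑ m, (vecMulVec (X' m) (X y m - sampleMean (X y)) +
        vecMulVec (X y m - sampleMean (X y)) (X' m))) k l) y := by
  have hmean : ∀ k, HasDerivAt (fun t => sampleMean (X t) k) (sampleMean X' k) y := fun k => by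
    simp only [sampleMean_apply]
    exact (HasDerivAt.fun_sum fun m _ => hX m k).const_mul _
  have hcentered : ∀ m k, HasDerivAt (fun t => X t m k - sampleMean (X t) k)
      (X' m k - sampleMean X' k) y := fun m k => (hX m k).sub (hmean k)
  simp only [sampleCov_apply]
  refine ((HasDerivAt.fun_sum (u := Finset.univ) fun m _ =>
    (hcentered m k).mul (hcentered m l)).const_mul ((n : ℝ) - 1)⁻¹).congr_deriv ?_
  have hw := sum_sub_sampleMean_apply (X y)
  simp only [Matrix.smul_apply, Matrix.sum_apply, Matrix.add_apply, vecMulVec_apply, smul_eq_mul,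
    Pi.sub_apply, Finset.sum_add_distrib]
  congr 2
  · simp only [sub_mul, Finset.sum_sub_distrib, ← Finset.mul_sum, hw, mul_zero, sub_zero]
  · simp only [mul_sub, Finset.sum_sub_distrib, ← Finset.sum_mul, hw, zero_mul, sub_zero]

variable [Fintype ι] [DecidableEq ι]

theorem hasDerivAt_det_sampleCov_updateRow (Y : Matrix (Fin n) ι ℝ) (i : Fin n) (j : ι) :
    HasDerivAt (fun t => (sampleCov (Y.updateRow i (Function.update (Y i) j t))).det)
      (2 * ((n : ℝ) - 1)⁻¹ * (adjugate (sampleCov Y) *ᵥ (Y i - sampleMean Y)) j) (Y i j) := by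
  have hY : Y.updateRow i (Function.update (Y i) j (Y i j)) = Y := by simp
  have hcov := hasDerivAt_sampleCov_apply (hasDerivAt_updateRow_update_apply Y i j (Y i j))
  simp only [hY] at hcov
  refine (hasDerivAt_det hcov).congr_deriv ?_
  have hrow : ∀ v : Fin n → ι → ℝ,
      ∑ m, vecMulVec ((0 : Matrix (Fin n) ι ℝ).updateRow i (Pi.single j 1) m) (v m) =
        vecMulVec (Pi.single j 1) (v i) ∧
      ∑ m, vecMulVec (v m) ((0 : Matrix (Fin n) ι ℝ).updateRow i (Pi.single j 1) m) =
        vecMulVec (v i) (Pi.single j 1) := fun v => by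
    have hzero : ∀ m, (0 : Matrix (Fin n) ι ℝ) m = 0 := fun _ => rfl
    constructor <;> rw [Finset.sum_eq_single i] <;> simp +contextual [updateRow_ne, hzero]
  have hsymm : (adjugate (sampleCov Y))ᵀ = adjugate (sampleCov Y) := by
    rw [adjugate_transpose, sampleCov_transpose]
  rw [hY, Finset.sum_add_distrib, (hrow _).1, (hrow _).2, trace_mul_comm, mul_smul_comm, mul_add,
    mul_vecMulVec, mul_vecMulVec, trace_smul, trace_add, trace_vecMulVec, trace_vecMulVec,
    dotProduct_single_one, dotProduct_comm, dotProduct_mulVec, ← mulVec_transpose, hsymm,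
    dotProduct_single_one, smul_eq_mul]
  ring

end SampleMoments

theorem conditional_mean_imputation_is_stationary_point_general
    (n d : ℕ)
    (Y : Matrix (Fin n) (Fin d) ℝ)
    (M : Finset (Fin n × Fin d)) :
    let mean : Matrix (Fin n) (Fin d) ℝ → (Fin d → ℝ) := fun X => (n : ℝ)⁻¹ • ∑ i, X i
    let cov : Matrix (Fin n) (Fin d) ℝ → Matrix (Fin d) (Fin d) ℝ :=
      fun X => ((n : ℝ) - 1)⁻¹ • ∑ i, vecMulVec (X i - mean X) (X i - mean X)
    ∀ (_hinv : IsUnit (cov Y).det)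
      (_himp : ∀ i : Fin n, ∀ j : {j : Fin d // (i, j) ∈ M},
        Y i j.1 = mean Y j.1 +
          (((cov Y).submatrix (fun a : {j : Fin d // (i, j) ∈ M} => a.1)
              (fun a : {j : Fin d // (i, j) ∉ M} => a.1) *ᵥ
            (((cov Y).submatrix (fun a : {j : Fin d // (i, j) ∉ M} => a.1)
              (fun a : {j : Fin d // (i, j) ∉ M} => a.1))⁻¹ *ᵥ
              fun l : {j : Fin d // (i, j) ∉ M} => Y i l.1 - mean Y l.1)) j)),
    ∀ i j, (i, j) ∈ M →
      HasDerivAt (fun t : ℝ => (cov (Y.updateRow i (Function.update (Y i) j t))).det)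
        0 (Y i j) := by
  intro mean cov hinv himp i j hij
  have hpos : (sampleCov Y).PosDef :=
    (sampleCov_posSemidef Y).posDef_iff_isUnit.2 ((isUnit_iff_isUnit_det _).2 hinv)
  obtain ⟨z, hz, hz_miss⟩ := exists_mulVec_eq_vanishing_of_conditional_mean (sampleCov Y)
    (fun x => (i, x) ∈ M)
    ((isUnit_iff_isUnit_det _).1 (hpos.submatrix Subtype.val_injective).isUnit)
    (Y i - sampleMean Y) fun a => sub_eq_of_eq_add' (himp i a)
  have hadj : (adjugate (sampleCov Y) *ᵥ (Y i - sampleMean Y)) j = 0 := by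
    rw [← hz, mulVec_mulVec, adjugate_mul, smul_mulVec, one_mulVec, Pi.smul_apply,
      hz_miss j hij, smul_zero]
  exact (hasDerivAt_det_sampleCov_updateRow Y i j).congr_deriv (by rw [hadj, mul_zero])

/-- If every incomplete row of `Y` is imputed by the conditional mean given its
observed coordinates (with the sample moments of `Y`), then `Y` is a stationary point of the
covariance determinant with respect to each missing entry. -/
theorem conditional_mean_imputation_is_stationary_point
    (n d : ℕ) (hn : 2 ≤ n)
    (Y : Matrix (Fin n) (Fin d) ℝ)
    (M : Finset (Fin n × Fin d)) :
    let mean : Matrix (Fin n) (Fin d) ℝ → (Fin d → ℝ) := fun X => (n : ℝ)⁻¹ • ∑ i, X i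
    let cov : Matrix (Fin n) (Fin d) ℝ → Matrix (Fin d) (Fin d) ℝ :=
      fun X => ((n : ℝ) - 1)⁻¹ • ∑ i, vecMulVec (X i - mean X) (X i - mean X)
    ∀ (_hinv : IsUnit (cov Y).det)
      (_himp : ∀ i : Fin n, ∀ j : {j : Fin d // (i, j) ∈ M},
        Y i j.1 = mean Y j.1 +
          (((cov Y).submatrix (fun a : {j : Fin d // (i, j) ∈ M} => a.1)
              (fun a : {j : Fin d // (i, j) ∉ M} => a.1) *ᵥ
            (((cov Y).submatrix (fun a : {j : Fin d // (i, j) ∉ M} => a.1)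
              (fun a : {j : Fin d // (i, j) ∉ M} => a.1))⁻¹ *ᵥ
              fun l : {j : Fin d // (i, j) ∉ M} => Y i l.1 - mean Y l.1)) j)),
    ∀ i j, (i, j) ∈ M →
      HasDerivAt (fun t : ℝ => (cov (Y.updateRow i (Function.update (Y i) j t))).det)
        0 (Y i j) :=
  conditional_mean_imputation_is_stationary_point_general n d Y M
end

section
/- Let d ≥ 2, let λ ∈ ℝ^d with λ_s > 0 for all s, let V be a d×d real orthogonal matrix, and set Σ = V diag(λ) Vᵀ (a symmetric positive definite matrix). Let c ∈ ℝ^d and y = V diag(√λ_1, …, √λ_d) c. Then the following are equivalent: (i) y_d = Σ_{d,−d} (Σ_{−d,−d})⁻¹ y_{−d} (the last coordinate equals its regression fit on the others); (ii) Σ_{s=1}^d c_s V_{d,s} / √λ_s = 0; (iii) for every σ² with 0 < σ² ≤ min_s λ_s, y_d = Σ_{s=1}^d c_s ((λ_s − σ²)/√λ_s) V_{d,s} (the regularized-PCA reconstruction of coordinate d); (iv) there exists σ² ≠ 0 such that y_d = Σ_{s=1}^d c_s ((λ_s − σ²)/√λ_s) V_{d,s}. -/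
/-!
Write `y = Σ x` with `x = V diag(1/√λ) c`, so that `x_d` is the sum in (ii) and the
regularized-PCA reconstruction equals `y_d - σ² x_d`; this gives (ii) ⇔ (iii) ⇔ (iv).
For (i), the regression residual `y_d - Σ_{d,-d} Σ_{-d,-d}⁻¹ y_{-d}` is `w ⬝ y` with
`w = (-Σ_{d,-d} Σ_{-d,-d}⁻¹, 1)`. The row vector `wᵀ Σ` vanishes off coordinate `d`, where it
is the Schur complement `s` of `Σ_{-d,-d}`, so the residual of `Σ x` is `s x_d`;
and `s = wᵀ Σ w > 0` because `w_d = 1`.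
-/

open Matrix

namespace Matrix

section Regression

variable {K : Type*} [Field K] {n : ℕ} (S : Matrix (Fin (n + 1)) (Fin (n + 1)) K)

noncomputable def lastResidualWeights : Fin (n + 1) → K :=
  Fin.snoc (-((fun j => S (Fin.last n) j.castSucc) ᵥ* (S.submatrix Fin.castSucc Fin.castSucc)⁻¹)) 1

noncomputable def lastSchurComplement : K :=
  S (Fin.last n) (Fin.last n) - (fun j => S (Fin.last n) j.castSucc) ⬝ᵥ
    ((S.submatrix Fin.castSucc Fin.castSucc)⁻¹ *ᵥ fun j => S j.castSucc (Fin.last n))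

theorem lastResidualWeights_dotProduct (y : Fin (n + 1) → K) :
    lastResidualWeights S ⬝ᵥ y = y (Fin.last n) - (fun j => S (Fin.last n) j.castSucc) ⬝ᵥ
      ((S.submatrix Fin.castSucc Fin.castSucc)⁻¹ *ᵥ fun j => y j.castSucc) := by
  rw [dotProduct_mulVec, dotProduct, Fin.sum_univ_castSucc]
  simp only [lastResidualWeights, Fin.snoc_castSucc, Pi.neg_apply, neg_mul,
    Finset.sum_neg_distrib, Fin.snoc_last, one_mul, dotProduct]
  ring

theorem lastResidualWeights_vecMul (hA : IsUnit (S.submatrix Fin.castSucc Fin.castSucc).det) :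
    lastResidualWeights S ᵥ* S = Pi.single (Fin.last n) (lastSchurComplement S) := by
  funext i
  rw [vecMul, lastResidualWeights_dotProduct]
  refine Fin.lastCases ?_ (fun j => ?_) i
  · simp [lastSchurComplement]
  · have : ((fun j => S (Fin.last n) j.castSucc) ᵥ* (S.submatrix Fin.castSucc Fin.castSucc)⁻¹ ᵥ*
        S.submatrix Fin.castSucc Fin.castSucc) j = S (Fin.last n) j.castSucc := by
      rw [vecMul_vecMul, nonsing_inv_mul _ hA, vecMul_one]
    rw [Pi.single_apply, if_neg (Fin.castSucc_ne_last j), dotProduct_mulVec, ← this]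
    exact sub_self _

theorem lastResidualWeights_dotProduct_mulVec
    (hA : IsUnit (S.submatrix Fin.castSucc Fin.castSucc).det) (x : Fin (n + 1) → K) :
    lastResidualWeights S ⬝ᵥ (S *ᵥ x) = lastSchurComplement S * x (Fin.last n) := by
  rw [dotProduct_mulVec, lastResidualWeights_vecMul S hA, single_dotProduct]

end Regression

namespace PosDef

variable {n : ℕ} {S : Matrix (Fin (n + 1)) (Fin (n + 1)) ℝ}

theorem isUnit_det_submatrix_castSucc (hS : S.PosDef) :
    IsUnit (S.submatrix Fin.castSucc Fin.castSucc).det :=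
  (isUnit_iff_isUnit_det _).mp (hS.submatrix (Fin.castSucc_injective n)).isUnit

theorem lastSchurComplement_pos (hS : S.PosDef) : 0 < lastSchurComplement S := by
  have hw : lastResidualWeights S ≠ 0 := fun h => by
    simpa [lastResidualWeights] using congrFun h (Fin.last n)
  have := hS.dotProduct_mulVec_pos hw
  rwa [star_trivial, lastResidualWeights_dotProduct_mulVec S hS.isUnit_det_submatrix_castSucc,
    lastResidualWeights, Fin.snoc_last, mul_one] at this

theorem mulVec_last_eq_regression_iff (hS : S.PosDef) (x : Fin (n + 1) → ℝ) :
    (S *ᵥ x) (Fin.last n) = (fun j => S (Fin.last n) j.castSucc) ⬝ᵥ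
        ((S.submatrix Fin.castSucc Fin.castSucc)⁻¹ *ᵥ fun j => (S *ᵥ x) j.castSucc) ↔
      x (Fin.last n) = 0 := by
  rw [← sub_eq_zero, ← lastResidualWeights_dotProduct,
    lastResidualWeights_dotProduct_mulVec S hS.isUnit_det_submatrix_castSucc, mul_eq_zero,
    or_iff_right hS.lastSchurComplement_pos.ne']

end PosDef

section OrthogonalDiagonalization

variable {ι : Type*} [Fintype ι] [DecidableEq ι] {V : Matrix ι ι ℝ} {lam : ι → ℝ}

theorem posDef_mul_diagonal_mul_transpose (hV : Vᵀ * V = 1) (hlam : ∀ i, 0 < lam i) :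
    (V * diagonal lam * Vᵀ).PosDef := by
  have hB : Function.Injective V.vecMul :=
    vecMul_injective_iff_isUnit.mpr (.of_mul_eq_one_right _ hV)
  simpa using (PosDef.diagonal hlam).mul_mul_conjTranspose_same hB

theorem mul_diagonal_mul_transpose_mulVec_mulVec (hV : Vᵀ * V = 1) (u : ι → ℝ) :
    (V * diagonal lam * Vᵀ) *ᵥ (V *ᵥ u) = V *ᵥ fun i => lam i * u i := by
  rw [mulVec_mulVec, Matrix.mul_assoc, Matrix.mul_assoc, hV, Matrix.mul_one, ← mulVec_mulVec]
  exact congrArg _ (funext (mulVec_diagonal lam u))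

end OrthogonalDiagonalization

end Matrix

/-- For `Σ = V diag(λ) Vᵀ` with `V` orthogonal, `λ > 0`, and
`y = V diag(√λ) c`, the regression fit of the last coordinate, the orthogonality condition
`∑ c_s V_{d,s}/√λ_s = 0`, and the regularized-PCA reconstructions are all equivalent. -/
theorem regression_eq_regularized_PCA
    (e : ℕ) (lam : Fin (e + 2) → ℝ) (hlam : ∀ s, 0 < lam s)
    (V : Matrix (Fin (e + 2)) (Fin (e + 2)) ℝ) (hV : Vᵀ * V = 1)
    (c : Fin (e + 2) → ℝ) :
    let S : Matrix (Fin (e + 2)) (Fin (e + 2)) ℝ := V * Matrix.diagonal lam * Vᵀ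
    let y : Fin (e + 2) → ℝ := V *ᵥ fun s => Real.sqrt (lam s) * c s
    let l : Fin (e + 2) := Fin.last (e + 1)
    let Ssub : Matrix (Fin (e + 1)) (Fin (e + 1)) ℝ := S.submatrix Fin.castSucc Fin.castSucc
    List.TFAE [
      y l = (fun j : Fin (e + 1) => S l j.castSucc) ⬝ᵥ (Ssub⁻¹ *ᵥ fun j => y j.castSucc),
      ∑ s, c s * V l s / Real.sqrt (lam s) = 0,
      ∀ σ2 : ℝ, 0 < σ2 → (∀ s, σ2 ≤ lam s) →
        y l = ∑ s, c s * ((lam s - σ2) / Real.sqrt (lam s)) * V l s,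
      ∃ σ2 : ℝ, σ2 ≠ 0 ∧ y l = ∑ s, c s * ((lam s - σ2) / Real.sqrt (lam s)) * V l s ] := by
  intro S y l Ssub
  set x := V *ᵥ fun s => c s / Real.sqrt (lam s)
  have hy : S *ᵥ x = y := by
    refine (mul_diagonal_mul_transpose_mulVec_mulVec hV _).trans (congrArg _ (funext fun s => ?_))
    rw [mul_div_left_comm, Real.div_sqrt, mul_comm]
  have hx : x l = ∑ s, c s * V l s / Real.sqrt (lam s) := by
    simp only [x, mulVec, dotProduct]
    exact Finset.sum_congr rfl fun s _ => by ring
  have hfit (σ2 : ℝ) : ∑ s, c s * ((lam s - σ2) / Real.sqrt (lam s)) * V l s = y l - σ2 * x l := by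
    rw [hx, Finset.mul_sum, eq_sub_iff_add_eq, ← Finset.sum_add_distrib]
    refine Finset.sum_congr rfl fun s _ => ?_
    rw [sub_div, Real.div_sqrt]
    ring
  tfae_have 1 ↔ 2 := by
    rw [← hy, ← hx]
    exact (posDef_mul_diagonal_mul_transpose hV hlam).mulVec_last_eq_regression_iff x
  tfae_have 2 → 3 := fun h σ2 _ _ => by rw [hfit, hx, h, mul_zero, sub_zero]
  tfae_have 3 → 4 := fun h => by
    obtain ⟨s, -, hs⟩ := Finset.exists_min_image Finset.univ lam Finset.univ_nonempty
    exact ⟨lam s, (hlam s).ne', h (lam s) (hlam s) fun t => hs t (Finset.mem_univ t)⟩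
  tfae_have 4 → 2 := fun ⟨σ2, hσ2, h⟩ => by
    rwa [hfit, eq_comm, sub_eq_self, mul_eq_zero, or_iff_right hσ2, hx] at h
  tfae_finish
end
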